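/- arXiv:2404.03272 — 2 statements merged into one kernel-verified Lean document; each statement's English description precedes it below -/
import Mathlib

section
/- For any β > 0, σ ≥ 0, and x ∈ ℝ, E_{z∼N(0,1/(2π))}[ T_γ^β( x/√(1+σ²) + σ z/√(1+σ²) ) ] = T_γ^s(x), where s = √((1+β²)(1+σ²) − 1). -/
open Real

/-- Gaussian mass of the lattice `(1/γ)ℤ`. -/
noncomputable def latticeMass (γ : ℝ) : ℝ :=
  ∑' k : ℤ, Real.exp (-Real.pi * ((k : ℝ) / γ) ^ 2)

/-- Likelihood ratio `T_γ^β` of the β-smoothed discrete Gaussian on `(1/γ)ℤ`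
with respect to `N(0, 1/(2π))`. -/
noncomputable def pancakeLR (γ β z : ℝ) : ℝ :=
  (Real.sqrt (1 + β ^ 2) / (β * latticeMass γ)) *
    ∑' k : ℤ, Real.exp (-Real.pi * (z - Real.sqrt (1 + β ^ 2) * (k : ℝ) / γ) ^ 2 / β ^ 2)

/-!
Each summand of `T_γ^β` is a Gaussian bump, and pulling it back along the affine map
`z ↦ (x + σ z) / √(1 + σ²)` and integrating against `exp (-π z²)` is a Gaussian integral:
completing the square turns the bump of width `√(1+σ²) β` into one of width `s`, where
`s² = (1 + σ²) β² + σ²`, centred at the same lattice point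
`√(1+σ²) √(1+β²) k / γ = √(1+s²) k / γ`.
The termwise integrals are summable over `ℤ`, so integral and sum may be exchanged.
-/

open MeasureTheory

theorem summable_exp_neg_pi_sub_mul_int_sq (a t : ℝ) {w : ℝ} (ht : t ≠ 0) (hw : 0 < w) :
    Summable fun k : ℤ => exp (-π * (a - t * k) ^ 2 / w) := by
  -- up to the factor `exp (-π a² / w)`, the summand is the modulus of a Jacobi theta term
  have hθ := ((summable_jacobiTheta₂_term_iff ((-(a * t / w) : ℝ) * Complex.I)
    ((t ^ 2 / w : ℝ) * Complex.I)).mpr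
      (by rw [Complex.mul_I_im, Complex.ofReal_re]; positivity)).norm
  refine (hθ.mul_left (exp (-π * a ^ 2 / w))).congr fun k => ?_
  rw [norm_jacobiTheta₂_term, ← exp_add]
  simp only [Complex.mul_I_im, Complex.ofReal_re]
  congr 1
  field_simp
  ring

theorem integral_gaussian_mul_gaussian_affine (a σ : ℝ) {v : ℝ} (hv : 0 < v) :
    ∫ z : ℝ, exp (-π * z ^ 2) * exp (-π * (a + σ * z) ^ 2 / v)
      = √(v / (v + σ ^ 2)) * exp (-π * a ^ 2 / (v + σ ^ 2)) := by
  have hw : 0 < v + σ ^ 2 := by positivity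
  have hsq : ∀ z : ℝ, exp (-π * z ^ 2) * exp (-π * (a + σ * z) ^ 2 / v)
      = exp (-π * a ^ 2 / (v + σ ^ 2)) *
          exp (-(π * (v + σ ^ 2) / v) * (z + a * σ / (v + σ ^ 2)) ^ 2) := by
    intro z
    rw [← exp_add, ← exp_add]
    congr 1
    field_simp
    ring
  simp_rw [hsq]
  rw [integral_const_mul,
    integral_add_right_eq_self (fun z => exp (-(π * (v + σ ^ 2) / v) * z ^ 2)),
    integral_gaussian, mul_comm]
  congr 2
  field_simp

theorem integral_gaussian_mul_tsum_gaussian_affine (a σ t : ℝ) {v : ℝ} (ht : t ≠ 0)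
    (hv : 0 < v) :
    ∫ z : ℝ, exp (-π * z ^ 2) * ∑' k : ℤ, exp (-π * (a + σ * z - t * k) ^ 2 / v)
      = √(v / (v + σ ^ 2)) * ∑' k : ℤ, exp (-π * (a - t * k) ^ 2 / (v + σ ^ 2)) := by
  set F : ℤ → ℝ → ℝ := fun k z =>
    exp (-π * z ^ 2) * exp (-π * (a - t * k + σ * z) ^ 2 / v)
  have hF : ∀ k, ∫ z, F k z =
      √(v / (v + σ ^ 2)) * exp (-π * (a - t * k) ^ 2 / (v + σ ^ 2)) :=
    fun k => integral_gaussian_mul_gaussian_affine _ σ hv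
  have hF_int : ∀ k, Integrable (F k) := fun k =>
    .of_integral_ne_zero (by rw [hF]; positivity)
  have hF_norm : ∀ k, ∫ z, ‖F k z‖ = ∫ z, F k z := fun k =>
    integral_congr_ae (.of_forall fun z => norm_of_nonneg (by positivity))
  calc ∫ z, exp (-π * z ^ 2) * ∑' k : ℤ, exp (-π * (a + σ * z - t * k) ^ 2 / v)
      = ∫ z, ∑' k, F k z := by
        simp only [F, ← tsum_mul_left, add_sub_right_comm]
    _ = ∑' k, ∫ z, F k z := by
        refine (integral_tsum_of_summable_integral_norm hF_int ?_).symm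
        simp_rw [hF_norm, hF]
        exact (summable_exp_neg_pi_sub_mul_int_sq a t ht (by positivity)).mul_left _
    _ = _ := by simp_rw [hF, tsum_mul_left]

theorem pancakeLR_smoothing_general (γ β σ x : ℝ) (hγ : 0 < γ) (hβ : 0 < β) :
    ∫ z : ℝ, Real.exp (-Real.pi * z ^ 2) *
        pancakeLR γ β (x / Real.sqrt (1 + σ ^ 2) + σ * z / Real.sqrt (1 + σ ^ 2))
      = pancakeLR γ (Real.sqrt ((1 + β ^ 2) * (1 + σ ^ 2) - 1)) x := by
  unfold pancakeLR
  set A := √(1 + σ ^ 2)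
  set B := √(1 + β ^ 2)
  set s := √((1 + β ^ 2) * (1 + σ ^ 2) - 1) with hs
  have hA_pos : 0 < A := sqrt_pos.2 (by positivity)
  have hA_sq : A ^ 2 = 1 + σ ^ 2 := sq_sqrt (by positivity)
  have hB_sq : B ^ 2 = 1 + β ^ 2 := sq_sqrt (by positivity)
  have hs_sq : s ^ 2 = (A * β) ^ 2 + σ ^ 2 := by
    rw [hs, sq_sqrt (by nlinarith [sq_nonneg β, sq_nonneg σ]), mul_pow, hA_sq]; ring
  have hs_pos : 0 < s := sqrt_pos.2 (by nlinarith [sq_nonneg β, sq_nonneg σ])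
  have h1s : √(1 + s ^ 2) = A * B := by
    rw [← sqrt_sq (by positivity : 0 ≤ A * B), hs_sq, mul_pow, mul_pow, hA_sq, hB_sq]; ring_nf
  have hterm : ∀ z (k : ℤ), exp (-π * (x / A + σ * z / A - B * k / γ) ^ 2 / β ^ 2)
      = exp (-π * (x + σ * z - A * B / γ * k) ^ 2 / (A * β) ^ 2) := by
    intro z k
    congr 1
    field_simp
  calc _ = B / (β * latticeMass γ) * ∫ z, exp (-π * z ^ 2) *
        ∑' k : ℤ, exp (-π * (x + σ * z - A * B / γ * k) ^ 2 / (A * β) ^ 2) := by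
        rw [← integral_const_mul]
        congr 1 with z
        simp only [hterm]
        ring
    _ = _ := by
        rw [integral_gaussian_mul_tsum_gaussian_affine x σ _ (by positivity) (by positivity),
          ← hs_sq, ← div_pow, sqrt_sq (by positivity), h1s]
        simp_rw [mul_div_right_comm (A * B) _ γ]
        field_simp

/-- Gaussian smoothing identity for the likelihood ratios: averaging `T_γ^β` over
`z ∼ N(0,1/(2π))` (density `exp(-πz²)`) yields `T_γ^s` with
`s = √((1+β²)(1+σ²) − 1)`. -/
theorem pancakeLR_smoothing (γ β σ x : ℝ) (hγ : 0 < γ) (hβ : 0 < β) (hσ : 0 ≤ σ) :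
    ∫ z : ℝ, Real.exp (-Real.pi * z ^ 2) *
        pancakeLR γ β (x / Real.sqrt (1 + σ ^ 2) + σ * z / Real.sqrt (1 + σ ^ 2))
      = pancakeLR γ (Real.sqrt ((1 + β ^ 2) * (1 + σ ^ 2) - 1)) x :=
  pancakeLR_smoothing_general γ β σ x hγ hβ
end

section
/- Pointwise maximum of the smoothed likelihood ratio: for any γ > 0 and β > 0, T_γ^β(z) ≤ T_γ^β(0) ≤ √(1+β²)/β for all z ∈ ℝ. In particular, if β² = 1/(πγ²) and γ > 1, then T_γ^β(z) ≤ γ√(2π) for all z. -/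
/-!
Up to the prefactor, `T_γ^β(z)` is the Gaussian sum `∑ₙ exp(-π a (n - t)²)` with
`a = (1+β²)/(βγ)²` and `t = zγ/√(1+β²)`. Poisson summation (the theta transformation formula)
turns it into `a^{-1/2} θ(t, i/a)`, and for real `t` every term of `θ(t, i/a)` has the modulus it
has at `t = 0`; hence the unshifted sum is the largest. At `z = 0`, `a ≥ 1/γ²` bounds the sum by
`ρ((1/γ)ℤ)`, which cancels against the normalisation and leaves `√(1+β²)/β`.
-/

open Real

open Complex

theorem summable_exp_neg_mul_int_sq {a : ℝ} (ha : 0 < a) :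
    Summable fun n : ℤ ↦ rexp (-π * a * n ^ 2) := by
  simpa [mul_assoc] using summable_pow_mul_jacobiTheta₂_term_bound 0 ha 0

theorem norm_jacobiTheta₂_ofReal_le (x : ℝ) {τ : ℂ} (hτ : 0 < τ.im) :
    ‖jacobiTheta₂ x τ‖ ≤ ∑' n : ℤ, rexp (-π * τ.im * n ^ 2) := by
  have hnorm (n : ℤ) : ‖jacobiTheta₂_term n x τ‖ = rexp (-π * τ.im * n ^ 2) := by
    rw [norm_jacobiTheta₂_term, ofReal_im]
    ring_nf
  calc ‖jacobiTheta₂ x τ‖ ≤ ∑' n : ℤ, ‖jacobiTheta₂_term n x τ‖ :=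
        norm_tsum_le_tsum_norm ((summable_exp_neg_mul_int_sq hτ).congr fun n ↦ (hnorm n).symm)
    _ = _ := tsum_congr hnorm

theorem ofReal_tsum_exp_neg_mul_int_sub_sq {a : ℝ} (ha : 0 < a) (t : ℝ) :
    ((∑' n : ℤ, rexp (-π * a * (n - t) ^ 2) : ℝ) : ℂ) =
      1 / (a : ℂ) ^ (1 / 2 : ℂ) * jacobiTheta₂ t (I / a) := by
  have ha' : (a : ℂ) ≠ 0 := ofReal_ne_zero.mpr ha.ne'
  rw [← jacobiTheta₂_neg_left, jacobiTheta₂, ofReal_tsum]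
  calc ∑' n : ℤ, ((rexp (-π * a * (n - t) ^ 2) : ℝ) : ℂ)
      = cexp (-π * a * t ^ 2) * ∑' n : ℤ, cexp (-π * a * n ^ 2 + 2 * π * (a * t) * n) := by
        rw [← tsum_mul_left]
        refine tsum_congr fun n ↦ ?_
        rw [ofReal_exp, ← Complex.exp_add]
        push_cast
        ring_nf
    _ = cexp (-π * a * t ^ 2) * (1 / (a : ℂ) ^ (1 / 2 : ℂ) *
          (cexp (π * a * t ^ 2) * ∑' n : ℤ, jacobiTheta₂_term n (-t) (I / a))) := by
        rw [tsum_exp_neg_quadratic (by simpa using ha), ← tsum_mul_left (a := cexp _)]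
        congr 2
        refine tsum_congr fun n ↦ ?_
        rw [jacobiTheta₂_term, ← Complex.exp_add]
        congr 1
        field_simp
        ring_nf
        rw [I_sq]
        ring
    _ = _ := by
        rw [mul_left_comm (cexp _), ← mul_assoc (cexp _), ← Complex.exp_add]
        simp

theorem tsum_exp_neg_mul_int_sub_sq_le {a : ℝ} (ha : 0 < a) (t : ℝ) :
    ∑' n : ℤ, rexp (-π * a * (n - t) ^ 2) ≤ ∑' n : ℤ, rexp (-π * a * n ^ 2) := by
  have hsum_nonneg : 0 ≤ ∑' n : ℤ, rexp (-π * a * (n - t) ^ 2) :=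
    tsum_nonneg fun _ ↦ (exp_pos _).le
  have hroot : ‖1 / (a : ℂ) ^ (1 / 2 : ℂ)‖ = 1 / a ^ (1 / 2 : ℝ) := by
    rw [norm_div, norm_one, ← ofReal_ofNat, ← ofReal_one, ← ofReal_div, ← ofReal_cpow ha.le,
      norm_real, norm_of_nonneg (by positivity)]
  have him : (I / a).im = 1 / a := by simp
  calc ∑' n : ℤ, rexp (-π * a * (n - t) ^ 2)
      = 1 / a ^ (1 / 2 : ℝ) * ‖jacobiTheta₂ t (I / a)‖ := by
        rw [← norm_of_nonneg hsum_nonneg, ← norm_real, ofReal_tsum_exp_neg_mul_int_sub_sq ha,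
          norm_mul, hroot]
    _ ≤ 1 / a ^ (1 / 2 : ℝ) * ∑' n : ℤ, rexp (-π * (1 / a) * n ^ 2) := by
        gcongr
        have h := norm_jacobiTheta₂_ofReal_le t (τ := I / a) (by rw [him]; positivity)
        rwa [him] at h
    _ = ∑' n : ℤ, rexp (-π * a * n ^ 2) := by
        rw [tsum_exp_neg_mul_int_sq ha]
        simp only [mul_one_div]

theorem tsum_exp_neg_mul_int_sq_le_of_le {a b : ℝ} (ha : 0 < a) (hab : a ≤ b) :
    ∑' n : ℤ, rexp (-π * b * n ^ 2) ≤ ∑' n : ℤ, rexp (-π * a * n ^ 2) :=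
  (summable_exp_neg_mul_int_sq (ha.trans_le hab)).tsum_le_tsum
    (fun n ↦ exp_le_exp.mpr (by simp only [neg_mul, neg_le_neg_iff]; gcongr))
    (summable_exp_neg_mul_int_sq ha)

theorem latticeMass_eq (γ : ℝ) : latticeMass γ = ∑' k : ℤ, rexp (-π * γ⁻¹ ^ 2 * k ^ 2) :=
  tsum_congr fun _ ↦ congrArg rexp (by ring)

theorem latticeMass_pos {γ : ℝ} (hγ : γ ≠ 0) : 0 < latticeMass γ := by
  rw [latticeMass_eq]
  exact (summable_exp_neg_mul_int_sq (by positivity)).tsum_pos (fun _ ↦ (exp_pos _).le) 0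
    (exp_pos _)

theorem pancakeLR_eq {γ β : ℝ} (hγ : γ ≠ 0) (hβ : β ≠ 0) (z : ℝ) :
    pancakeLR γ β z = √(1 + β ^ 2) / (β * latticeMass γ) *
      ∑' k : ℤ, rexp (-π * (√(1 + β ^ 2) / (β * γ)) ^ 2 * (k - z * γ / √(1 + β ^ 2)) ^ 2) := by
  have hs : √(1 + β ^ 2) ≠ 0 := (sqrt_pos.mpr (by positivity)).ne'
  unfold pancakeLR
  congr 1
  refine tsum_congr fun k ↦ ?_
  congr 1
  field_simp
  ring

theorem pancakeLR_le_pancakeLR_zero {γ β : ℝ} (hγ : 0 < γ) (hβ : 0 < β) (z : ℝ) :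
    pancakeLR γ β z ≤ pancakeLR γ β 0 := by
  rw [pancakeLR_eq hγ.ne' hβ.ne', pancakeLR_eq hγ.ne' hβ.ne' 0]
  have := latticeMass_pos hγ.ne'
  refine mul_le_mul_of_nonneg_left ?_ (by positivity)
  simpa using tsum_exp_neg_mul_int_sub_sq_le (by positivity) (z * γ / √(1 + β ^ 2))

theorem pancakeLR_zero_le {γ β : ℝ} (hγ : 0 < γ) (hβ : 0 < β) :
    pancakeLR γ β 0 ≤ √(1 + β ^ 2) / β := by
  have hL := latticeMass_pos hγ.ne'
  have hsβ : 1 ≤ √(1 + β ^ 2) / β := by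
    rw [one_le_div hβ, le_sqrt hβ.le (by positivity)]
    linarith
  calc pancakeLR γ β 0 ≤ √(1 + β ^ 2) / (β * latticeMass γ) * latticeMass γ := by
        rw [pancakeLR_eq hγ.ne' hβ.ne', latticeMass_eq]
        refine mul_le_mul_of_nonneg_left ?_ (by positivity)
        simp only [zero_mul, zero_div, sub_zero]
        refine tsum_exp_neg_mul_int_sq_le_of_le (by positivity) ?_
        rw [div_mul_eq_div_div, div_eq_mul_inv _ γ, mul_pow]
        exact le_mul_of_one_le_left (by positivity) (one_le_pow₀ hsβ)
    _ = √(1 + β ^ 2) / β := by field_simp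

theorem sqrt_one_add_sq_div_le {γ β : ℝ} (hγ : 1 < γ) (hβ : 0 < β)
    (hβγ : β ^ 2 = 1 / (π * γ ^ 2)) : √(1 + β ^ 2) / β ≤ γ * √(2 * π) := by
  have hπγ : π * γ ^ 2 * β ^ 2 = 1 := by rw [hβγ]; field_simp
  have hπγ_ge : 1 ≤ π * γ ^ 2 := by nlinarith [pi_gt_three]
  have hβ_sq_le : β ^ 2 ≤ 1 := by rw [hβγ, div_le_one (by positivity)]; exact hπγ_ge
  rw [div_le_iff₀ hβ, sqrt_le_iff]
  refine ⟨by positivity, ?_⟩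
  rw [mul_pow, mul_pow, sq_sqrt (by positivity)]
  linarith

/-- Pointwise maximum of the smoothed likelihood ratio:
`T_γ^β(z) ≤ T_γ^β(0) ≤ √(1+β²)/β`; in particular, if `β² = 1/(πγ²)` and `γ > 1`,
then `T_γ^β(z) ≤ γ√(2π)` for all `z`. -/
theorem pancakeLR_max (γ β : ℝ) (hγ : 0 < γ) (hβ : 0 < β) :
    (∀ z : ℝ, pancakeLR γ β z ≤ pancakeLR γ β 0) ∧
    pancakeLR γ β 0 ≤ Real.sqrt (1 + β ^ 2) / β ∧
    (β ^ 2 = 1 / (Real.pi * γ ^ 2) → 1 < γ →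
      ∀ z : ℝ, pancakeLR γ β z ≤ γ * Real.sqrt (2 * Real.pi)) :=
  ⟨pancakeLR_le_pancakeLR_zero hγ hβ, pancakeLR_zero_le hγ hβ, fun hβγ hγ₁ z ↦
    (pancakeLR_le_pancakeLR_zero hγ hβ z).trans <|
      (pancakeLR_zero_le hγ hβ).trans (sqrt_one_add_sq_div_le hγ₁ hβ hβγ)⟩
end
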